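/- arXiv:1912.01778 — 8 statements merged into one kernel-verified Lean document; each statement's English description precedes it below -/
import Mathlib

section
/- Let $s>0$, $b>0$, and define $p(b,x) = (x + x^b s)/(1 + x^b s + (1-x)^b s)$. Then for all $x \in (1/2, 1)$ one has $p(b,x) > p(0,x)$, and for all $x \in (0, 1/2)$ one has $p(b,x) < p(0,x)$. -/
/-- Biased single-agent update with balanced neighbor influence `s` on both ends:
`p s b x = (x + x^b s)/(1 + x^b s + (1-x)^b s)` (real powers). -/
noncomputable def p (s b x : ℝ) : ℝ :=
  (x + x ^ b * s) / (1 + x ^ b * s + (1 - x) ^ b * s)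

theorem stmt0 (s b : ℝ) (hs : 0 < s) (hb : 0 < b) :
    (∀ x ∈ Set.Ioo (1/2 : ℝ) 1, p s 0 x < p s b x) ∧
    (∀ x ∈ Set.Ioo (0 : ℝ) (1/2 : ℝ), p s b x < p s 0 x) := by
  constructor
  · rintro x ⟨hx1, hx2⟩
    have hx0 : (0:ℝ) < x := by linarith
    have h1x : (0:ℝ) ≤ 1 - x := by linarith
    have hBA : (1 - x) ^ b < x ^ b := Real.rpow_lt_rpow h1x (by linarith) hb
    have hA1 : x ^ b < 1 := Real.rpow_lt_one (le_of_lt hx0) hx2 hb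
    have hB0 : (0:ℝ) ≤ (1 - x) ^ b := Real.rpow_nonneg h1x b
    have hA0 : (0:ℝ) < x ^ b := Real.rpow_pos_of_pos hx0 b
    simp only [p, Real.rpow_zero]
    rw [div_lt_div_iff₀ (by nlinarith) (by positivity)]
    nlinarith [mul_pos (mul_pos hs hs) (sub_pos.mpr hBA),
      mul_pos hs (mul_pos (by linarith : (0:ℝ) < 1 - x) (sub_pos.mpr hBA)),
      mul_pos hs (mul_pos (by linarith : (0:ℝ) < 2*x - 1) (by linarith : (0:ℝ) < 1 - (1-x)^b))]
  · rintro x ⟨hx1, hx2⟩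
    have h1x : (0:ℝ) < 1 - x := by linarith
    have hBA : x ^ b < (1 - x) ^ b := Real.rpow_lt_rpow (le_of_lt hx1) (by linarith) hb
    have hB1 : (1 - x) ^ b < 1 := Real.rpow_lt_one (le_of_lt h1x) (by linarith) hb
    have hA0 : (0:ℝ) ≤ x ^ b := Real.rpow_nonneg (le_of_lt hx1) b
    have hB0 : (0:ℝ) < (1 - x) ^ b := Real.rpow_pos_of_pos h1x b
    simp only [p, Real.rpow_zero]
    rw [div_lt_div_iff₀ (by positivity) (by nlinarith)]
    nlinarith [mul_pos (mul_pos hs hs) (sub_pos.mpr hBA),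
      mul_pos hs (mul_pos hx1 (sub_pos.mpr hBA)),
      mul_pos hs (mul_pos (by linarith : (0:ℝ) < 1 - 2*x) (by linarith : (0:ℝ) < 1 - x^b))]
end

section
/- Let $s>0$, $0 < b < 1$, and $p(b,x) = (x + x^b s)/(1 + x^b s + (1-x)^b s)$. Then $p(b,x) < x$ for all $x \in (1/2, 1)$ and $p(b,x) > x$ for all $x \in (0, 1/2)$. -/
lemma key_ineq (b : ℝ) (hb1 : b < 1) {x y : ℝ} (hx : 0 < x) (hy : 0 < y)
    (hxy : y < x) : x ^ b * y < x * y ^ b := by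
  have hx' : x ^ b * x ^ (1 - b) = x := by
    rw [← Real.rpow_add hx]; norm_num
  have hy' : y ^ b * y ^ (1 - b) = y := by
    rw [← Real.rpow_add hy]; norm_num
  have h1 : y ^ (1 - b) < x ^ (1 - b) :=
    Real.rpow_lt_rpow hy.le hxy (by linarith)
  have hb : 0 < x ^ b := Real.rpow_pos_of_pos hx b
  have hyb : 0 < y ^ b := Real.rpow_pos_of_pos hy b
  nlinarith [mul_pos hb hyb]

theorem stmt3 (s b : ℝ) (hs : 0 < s) (hb0 : 0 < b) (hb1 : b < 1) :
    (∀ x ∈ Set.Ioo (1/2 : ℝ) 1, p s b x < x) ∧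
    (∀ x ∈ Set.Ioo (0 : ℝ) (1/2 : ℝ), x < p s b x) := by
  constructor
  · rintro x ⟨hx1, hx2⟩
    have hx0 : 0 < x := by linarith
    have h1x : 0 < 1 - x := by linarith
    have hxb : 0 < x ^ b := Real.rpow_pos_of_pos hx0 b
    have h1xb : 0 < (1 - x) ^ b := Real.rpow_pos_of_pos h1x b
    have hD : 0 < 1 + x ^ b * s + (1 - x) ^ b * s := by positivity
    rw [p, div_lt_iff₀ hD]
    have hk : x ^ b * (1 - x) < x * (1 - x) ^ b :=
      key_ineq b hb1 hx0 h1x (by linarith)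
    nlinarith
  · rintro x ⟨hx1, hx2⟩
    have hx0 : 0 < x := hx1
    have h1x : 0 < 1 - x := by linarith
    have hxb : 0 < x ^ b := Real.rpow_pos_of_pos hx0 b
    have h1xb : 0 < (1 - x) ^ b := Real.rpow_pos_of_pos h1x b
    have hD : 0 < 1 + x ^ b * s + (1 - x) ^ b * s := by positivity
    rw [p, lt_div_iff₀ hD]
    have hk : (1 - x) ^ b * x < (1 - x) * x ^ b :=
      key_ineq b hb1 h1x hx0 (by linarith)
    nlinarith
end

section
/- Fix $s > 0$ and $b > 0$, and let $g(x) = s x^b + 2sx + 2s^2 x^b - s - s x^{b+1} - s^2 x^b - s x (1-x)^b - s^2 (1-x)^b$ for $x \in (0,1)$. Then $g$ is strictly increasing on $(0,1)$ and $g(1/2) = 0$; consequently $g(x) > 0$ for $x \in (1/2,1)$ and $g(x) < 0$ for $x \in (0,1/2)$. -/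
/-!
Collecting terms, `g s b x = s * (w x - w (1 - x) + 2 x - 1)` with `w x = (s + 1 - x) x ^ b`.
The bracket is odd about `x = 1/2`, so it vanishes there, and its derivative
`b (s + 1 - x) x ^ (b - 1) + b (s + x) (1 - x) ^ (b - 1) + (1 - x ^ b) + (1 - (1 - x) ^ b)`
is a sum of nonnegative terms, the last two positive on `(0, 1)`.
-/

/-- The numerator function arising in the comparison `p(b,x) - p(0,x)`. -/
noncomputable def g (s b x : ℝ) : ℝ :=
  s * x ^ b + 2 * s * x + 2 * s ^ 2 * x ^ b - s - s * x ^ (b + 1) - s ^ 2 * x ^ b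
    - s * x * (1 - x) ^ b - s ^ 2 * (1 - x) ^ b

open Set

noncomputable def weightedPow (s b x : ℝ) : ℝ := (s + 1 - x) * x ^ b

noncomputable def gReduced (s b x : ℝ) : ℝ :=
  weightedPow s b x - weightedPow s b (1 - x) + 2 * x - 1

lemma g_eq_mul_gReduced (s b : ℝ) {x : ℝ} (hx : 0 < x) : g s b x = s * gReduced s b x := by
  rw [g, gReduced, weightedPow, weightedPow, Real.rpow_add_one hx.ne']
  ring

lemma gReduced_one_half (s b : ℝ) : gReduced s b (1 / 2) = 0 := by
  norm_num [gReduced]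

lemma hasDerivAt_weightedPow (s b : ℝ) {x : ℝ} (hx : 0 < x) :
    HasDerivAt (weightedPow s b) (b * (s + 1 - x) * x ^ (b - 1) - x ^ b) x := by
  have h := ((hasDerivAt_id' x).const_sub (s + 1)).mul
    (Real.hasDerivAt_rpow_const (p := b) (Or.inl hx.ne'))
  exact h.congr_deriv (by ring)

lemma hasDerivAt_gReduced (s b : ℝ) {x : ℝ} (hx : x ∈ Ioo 0 1) :
    HasDerivAt (gReduced s b)
      (b * (s + 1 - x) * x ^ (b - 1) + b * (s + x) * (1 - x) ^ (b - 1)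
        + (1 - x ^ b) + (1 - (1 - x) ^ b)) x := by
  have hflip := (hasDerivAt_weightedPow s b (sub_pos.2 hx.2)).comp x
    ((hasDerivAt_id' x).const_sub 1)
  have h := (((hasDerivAt_weightedPow s b hx.1).sub hflip).add
    ((hasDerivAt_id' x).const_mul 2)).sub_const 1
  exact h.congr_deriv (by ring)

lemma strictMonoOn_gReduced (s b : ℝ) (hs : 0 ≤ s) (hb : 0 < b) :
    StrictMonoOn (gReduced s b) (Ioo 0 1) := by
  refine strictMonoOn_of_deriv_pos (convex_Ioo 0 1)
    (fun x hx => (hasDerivAt_gReduced s b hx).continuousAt.continuousWithinAt) ?_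
  rw [interior_Ioo]
  intro x hx
  rw [(hasDerivAt_gReduced s b hx).deriv]
  obtain ⟨hx0, hx1⟩ := hx
  have h1x : 0 < 1 - x := by linarith
  have hl : 0 ≤ b * (s + 1 - x) * x ^ (b - 1) :=
    mul_nonneg (mul_nonneg hb.le (by linarith)) (Real.rpow_nonneg hx0.le _)
  have hr : 0 ≤ b * (s + x) * (1 - x) ^ (b - 1) :=
    mul_nonneg (mul_nonneg hb.le (by linarith)) (Real.rpow_nonneg h1x.le _)
  have hxb : x ^ b < 1 := Real.rpow_lt_one hx0.le hx1 hb
  have h1xb : (1 - x) ^ b < 1 := Real.rpow_lt_one h1x.le (by linarith) hb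
  linarith

theorem stmt4 (s b : ℝ) (hs : 0 < s) (hb : 0 < b) :
    StrictMonoOn (g s b) (Set.Ioo (0 : ℝ) 1) ∧
    g s b (1/2) = 0 ∧
    (∀ x ∈ Set.Ioo (1/2 : ℝ) 1, 0 < g s b x) ∧
    (∀ x ∈ Set.Ioo (0 : ℝ) (1/2 : ℝ), g s b x < 0) := by
  have hmono : StrictMonoOn (g s b) (Ioo 0 1) := fun x hx y hy hxy => by
    rw [g_eq_mul_gReduced s b hx.1, g_eq_mul_gReduced s b hy.1]
    exact mul_lt_mul_of_pos_left (strictMonoOn_gReduced s b hs.le hb hx hy hxy) hs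
  have hzero : g s b (1 / 2) = 0 := by
    rw [g_eq_mul_gReduced s b one_half_pos, gReduced_one_half, mul_zero]
  have hhalf : (1 / 2 : ℝ) ∈ Ioo 0 1 := ⟨one_half_pos, one_half_lt_one⟩
  refine ⟨hmono, hzero, ?_, ?_⟩
  · rintro x ⟨hx0, hx1⟩
    exact hzero ▸ hmono hhalf ⟨by linarith, hx1⟩ hx0
  · rintro x ⟨hx0, hx1⟩
    exact hzero ▸ hmono ⟨hx0, by linarith⟩ hhalf hx1
end

section
/- Consider the biased assimilation model with $b_i \ge 1$ for all $i$ on a strongly connected graph. If $x_i(0) \ge 1/2$ for all $i$ and $x_j(0) > 1/2$ for at least one $j$, then $x_i(k) \to 1$ as $k \to \infty$ for every $i$. -/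
open Finset Filter Topology

/-- Weighted sum of neighbors' opinions: `s_i = ∑_{j ∈ N_i} w_{ij} x_j`. -/
noncomputable def wsum {N : ℕ} (w : Fin N → Fin N → ℝ) (Nbr : Fin N → Finset (Fin N))
    (x : Fin N → ℝ) (i : Fin N) : ℝ :=
  ∑ j ∈ Nbr i, w i j * x j

/-- Weighted degree `d_i = ∑_{j ∈ N_i} w_{ij}`. -/
noncomputable def degw {N : ℕ} (w : Fin N → Fin N → ℝ) (Nbr : Fin N → Finset (Fin N))
    (i : Fin N) : ℝ :=
  ∑ j ∈ Nbr i, w i j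

/-- Biased assimilation update map (componentwise). Powers are real powers. -/
noncomputable def F {N : ℕ} (w : Fin N → Fin N → ℝ) (Nbr : Fin N → Finset (Fin N))
    (b : Fin N → ℝ) (x : Fin N → ℝ) (i : Fin N) : ℝ :=
  (w i i * x i + x i ^ b i * wsum w Nbr x i) /
    (w i i + x i ^ b i * wsum w Nbr x i + (1 - x i) ^ b i * (degw w Nbr i - wsum w Nbr x i))

/-- The directed influence graph (edge `j → i` iff `j ∈ Nbr i`) is strongly connected. -/
def StronglyConnected {N : ℕ} (Nbr : Fin N → Finset (Fin N)) : Prop :=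
  ∀ i j : Fin N, Relation.TransGen (fun a c => a ∈ Nbr c) i j

/-- Lyapunov stability of a fixed point of the discrete-time system `x⁺ = G x`. -/
def LyapStable {E : Type*} [NormedAddCommGroup E] (G : E → E) (q : E) : Prop :=
  ∀ ε > 0, ∃ δ > 0, ∀ x, ‖x - q‖ < δ → ∀ k : ℕ, ‖G^[k] x - q‖ < ε

/-- Local exponential stability of a fixed point of `x⁺ = G x`. -/
def LocExpStable {E : Type*} [NormedAddCommGroup E] (G : E → E) (q : E) : Prop :=
  ∃ δ > 0, ∃ C > 0, ∃ r, 0 ≤ r ∧ r < 1 ∧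
    ∀ x, ‖x - q‖ ≤ δ → ∀ k : ℕ, ‖G^[k] x - q‖ ≤ C * r ^ k * ‖x - q‖

/-- Spectral radius of a real square matrix: supremum of moduli of its complex eigenvalues. -/
noncomputable def specRad {n : ℕ} (M : Matrix (Fin n) (Fin n) ℝ) : ℝ :=
  sSup {r : ℝ | ∃ μ : ℂ, (M.map (fun a => (a : ℂ))).charpoly.IsRoot μ ∧ r = ‖μ‖}

/-!
For agent `i` with opinion `X`, write `s = ∑ w_ij x_j` and `t = d - s = ∑ w_ij (1 - x_j)`.
Then `X ≤ x_i⁺` amounts to `X (1 - X)^b t ≤ X^b (1 - X) s`. On `[1/2, 1]^N` we have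
`0 ≤ t ≤ s`, and `(1 - X)^(b-1) ≤ X^(b-1)` because `b ≥ 1`, so the update increases every
opinion without leaving `[1/2, 1]`. Hence the opinions increase to a limit `L`, a fixed point
of the continuous update. At a fixed point an agent with `L i < 1` must have `t = s`, i.e. all its
neighbours sit at `1/2`. Following a path from the agent with `L j > 1/2` to any agent `i`,
the assumption `L i < 1` would propagate back to `L j = 1/2`.
-/

section Scalar

variable {ω X s t b : ℝ}

lemma one_sub_rpow_mul_le_rpow_mul_one_sub (hb : 1 ≤ b) (hX : 1 / 2 ≤ X) (hX1 : X ≤ 1) :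
    (1 - X) ^ b * X ≤ X ^ b * (1 - X) := by
  have hsplit : ∀ {Y : ℝ}, 0 ≤ Y → Y ^ b = Y ^ (b - 1) * Y := fun hY => by
    conv_lhs => rw [← sub_add_cancel b 1, Real.rpow_add' hY (by linarith), Real.rpow_one]
  have hmono : (1 - X) ^ (b - 1) ≤ X ^ (b - 1) :=
    Real.rpow_le_rpow (by linarith) (by linarith) (by linarith)
  rw [hsplit (by linarith : (0 : ℝ) ≤ 1 - X), hsplit (by linarith : (0 : ℝ) ≤ X)]
  nlinarith [mul_le_mul_of_nonneg_right hmono (by nlinarith : 0 ≤ X * (1 - X))]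

lemma update_denom_pos (hω : 0 ≤ ω) (hX : 0 < X) (hX1 : X ≤ 1) (hs : 0 < s) (ht : 0 ≤ t) :
    0 < ω + X ^ b * s + (1 - X) ^ b * t := by
  have : 0 < X ^ b * s := mul_pos (Real.rpow_pos_of_pos hX b) hs
  have : 0 ≤ (1 - X) ^ b * t := mul_nonneg (Real.rpow_nonneg (by linarith) b) ht
  linarith

lemma self_le_update (hω : 0 ≤ ω) (hb : 1 ≤ b) (hX : 1 / 2 ≤ X) (hX1 : X ≤ 1)
    (hs : 0 < s) (ht : 0 ≤ t) (hts : t ≤ s) :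
    X ≤ (ω * X + X ^ b * s) / (ω + X ^ b * s + (1 - X) ^ b * t) := by
  rw [le_div_iff₀ (update_denom_pos hω (by linarith) hX1 hs ht)]
  have hcore := one_sub_rpow_mul_le_rpow_mul_one_sub hb hX hX1
  have : X ^ b * (1 - X) * t ≤ X ^ b * (1 - X) * s :=
    mul_le_mul_of_nonneg_left hts (mul_nonneg (Real.rpow_nonneg (by linarith) b) (by linarith))
  nlinarith [mul_le_mul_of_nonneg_right hcore ht]

lemma self_lt_update (hω : 0 ≤ ω) (hb : 1 ≤ b) (hX : 1 / 2 ≤ X) (hX1 : X < 1)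
    (hs : 0 < s) (ht : 0 ≤ t) (hts : t < s) :
    X < (ω * X + X ^ b * s) / (ω + X ^ b * s + (1 - X) ^ b * t) := by
  rw [lt_div_iff₀ (update_denom_pos hω (by linarith) hX1.le hs ht)]
  have hcore := one_sub_rpow_mul_le_rpow_mul_one_sub hb hX hX1.le
  have : X ^ b * (1 - X) * t < X ^ b * (1 - X) * s :=
    mul_lt_mul_of_pos_left hts (mul_pos (Real.rpow_pos_of_pos (by linarith) b) (by linarith))
  nlinarith [mul_le_mul_of_nonneg_right hcore ht]

lemma update_le_one (hω : 0 ≤ ω) (hX : 0 < X) (hX1 : X ≤ 1) (hs : 0 < s) (ht : 0 ≤ t) :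
    (ω * X + X ^ b * s) / (ω + X ^ b * s + (1 - X) ^ b * t) ≤ 1 := by
  rw [div_le_one (update_denom_pos hω hX hX1 hs ht)]
  nlinarith [mul_nonneg (Real.rpow_nonneg (by linarith : (0 : ℝ) ≤ 1 - X) b) ht]

end Scalar

lemma StronglyConnected.nbr_nonempty {N : ℕ} {Nbr : Fin N → Finset (Fin N)}
    (hsc : StronglyConnected Nbr) (i : Fin N) : (Nbr i).Nonempty := by
  cases hsc i i with
  | single h => exact ⟨_, h⟩
  | tail _ h => exact ⟨_, h⟩

section Network

variable {N : ℕ} {w : Fin N → Fin N → ℝ} {Nbr : Fin N → Finset (Fin N)} {b : Fin N → ℝ}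
  {y : Fin N → ℝ}

lemma degw_sub_wsum (i : Fin N) :
    degw w Nbr i - wsum w Nbr y i = ∑ j ∈ Nbr i, w i j * (1 - y j) := by
  simp only [degw, wsum, mul_sub, mul_one, sum_sub_distrib]

lemma wsum_sub_degw_sub_wsum (i : Fin N) :
    wsum w Nbr y i - (degw w Nbr i - wsum w Nbr y i) = ∑ j ∈ Nbr i, w i j * (2 * y j - 1) := by
  rw [degw_sub_wsum, wsum, ← sum_sub_distrib]
  exact sum_congr rfl fun j _ => by ring

lemma wsum_pos (hw : ∀ i, ∀ j ∈ Nbr i, 0 < w i j) (hne : ∀ i, (Nbr i).Nonempty)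
    (hy : ∀ i, 1 / 2 ≤ y i ∧ y i ≤ 1) (i : Fin N) : 0 < wsum w Nbr y i :=
  sum_pos (fun j hj => mul_pos (hw i j hj) (by linarith [(hy j).1])) (hne i)

lemma degw_sub_wsum_nonneg (hw : ∀ i, ∀ j ∈ Nbr i, 0 < w i j) (hy : ∀ i, 1 / 2 ≤ y i ∧ y i ≤ 1)
    (i : Fin N) : 0 ≤ degw w Nbr i - wsum w Nbr y i := by
  rw [degw_sub_wsum]
  exact sum_nonneg fun j hj => mul_nonneg (hw i j hj).le (by linarith [(hy j).2])

lemma degw_sub_wsum_le_wsum (hw : ∀ i, ∀ j ∈ Nbr i, 0 < w i j) (hy : ∀ i, 1 / 2 ≤ y i ∧ y i ≤ 1)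
    (i : Fin N) : degw w Nbr i - wsum w Nbr y i ≤ wsum w Nbr y i := by
  rw [← sub_nonneg, wsum_sub_degw_sub_wsum]
  exact sum_nonneg fun j hj => mul_nonneg (hw i j hj).le (by linarith [(hy j).1])

lemma le_F (hw : ∀ i, ∀ j ∈ Nbr i, 0 < w i j) (hne : ∀ i, (Nbr i).Nonempty) (hwii : ∀ i, 0 ≤ w i i)
    (hb : ∀ i, 1 ≤ b i) (hy : ∀ i, 1 / 2 ≤ y i ∧ y i ≤ 1) : y ≤ F w Nbr b y := fun i =>
  self_le_update (hwii i) (hb i) (hy i).1 (hy i).2 (wsum_pos hw hne hy i)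
    (degw_sub_wsum_nonneg hw hy i) (degw_sub_wsum_le_wsum hw hy i)

lemma F_le_one (hw : ∀ i, ∀ j ∈ Nbr i, 0 < w i j) (hne : ∀ i, (Nbr i).Nonempty)
    (hwii : ∀ i, 0 ≤ w i i) (hy : ∀ i, 1 / 2 ≤ y i ∧ y i ≤ 1) : F w Nbr b y ≤ 1 := fun i =>
  update_le_one (hwii i) (by linarith [(hy i).1]) (hy i).2 (wsum_pos hw hne hy i)
    (degw_sub_wsum_nonneg hw hy i)

lemma nbr_eq_half_of_F_eq_of_lt_one (hw : ∀ i, ∀ j ∈ Nbr i, 0 < w i j)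
    (hne : ∀ i, (Nbr i).Nonempty) (hwii : ∀ i, 0 ≤ w i i) (hb : ∀ i, 1 ≤ b i)
    (hy : ∀ i, 1 / 2 ≤ y i ∧ y i ≤ 1) {i : Fin N} (hfix : F w Nbr b y i = y i) (hlt : y i < 1) :
    ∀ a ∈ Nbr i, y a = 1 / 2 := by
  have hts : degw w Nbr i - wsum w Nbr y i = wsum w Nbr y i := by
    refine (degw_sub_wsum_le_wsum hw hy i).eq_of_not_lt fun hts => ?_
    exact (self_lt_update (hwii i) (hb i) (hy i).1 hlt (wsum_pos hw hne hy i)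
      (degw_sub_wsum_nonneg hw hy i) hts).ne' hfix
  have hsum : ∑ j ∈ Nbr i, w i j * (2 * y j - 1) = 0 := by
    rw [← wsum_sub_degw_sub_wsum, hts, sub_self]
  intro a ha
  have := (sum_eq_zero_iff_of_nonneg fun j hj =>
    mul_nonneg (hw i j hj).le (by linarith [(hy j).1])).mp hsum a ha
  rcases mul_eq_zero.mp this with h | h
  · exact absurd h (hw i a ha).ne'
  · linarith

lemma continuousAt_F (hw : ∀ i, ∀ j ∈ Nbr i, 0 < w i j) (hne : ∀ i, (Nbr i).Nonempty)
    (hwii : ∀ i, 0 ≤ w i i) (hb : ∀ i, 1 ≤ b i) (hy : ∀ i, 1 / 2 ≤ y i ∧ y i ≤ 1) :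
    ContinuousAt (F w Nbr b) y := by
  refine continuousAt_pi.mpr fun i => ?_
  have hyi : 0 < y i := by linarith [(hy i).1]
  have hden := update_denom_pos (b := b i) (hwii i) hyi (hy i).2 (wsum_pos hw hne hy i)
    (degw_sub_wsum_nonneg hw hy i)
  have hsum : Continuous fun z : Fin N → ℝ => wsum w Nbr z i := by
    unfold wsum; fun_prop
  have hpow : ContinuousAt (fun z : Fin N → ℝ => z i ^ b i) y :=
    (continuous_apply i).continuousAt.rpow_const (Or.inl hyi.ne')
  have hpow' : ContinuousAt (fun z : Fin N → ℝ => (1 - z i) ^ b i) y :=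
    (continuous_const.sub (continuous_apply i)).continuousAt.rpow_const
      (Or.inr (by linarith [hb i]))
  unfold F
  exact ((continuousAt_const.mul (continuous_apply i).continuousAt).add
    (hpow.mul hsum.continuousAt)).div
    ((continuousAt_const.add (hpow.mul hsum.continuousAt)).add
      (hpow'.mul (continuousAt_const.sub hsum.continuousAt))) hden.ne'

lemma eq_one_of_F_eq (hsc : StronglyConnected Nbr) (hw : ∀ i, ∀ j ∈ Nbr i, 0 < w i j)
    (hwii : ∀ i, 0 ≤ w i i) (hb : ∀ i, 1 ≤ b i) (hy : ∀ i, 1 / 2 ≤ y i ∧ y i ≤ 1)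
    (hfix : F w Nbr b y = y) {j : Fin N} (hj : 1 / 2 < y j) (i : Fin N) : y i = 1 := by
  have hne := hsc.nbr_nonempty
  by_contra hi
  have hlt : y i < 1 := (hy i).2.lt_of_ne hi
  have hhalf : ∀ a, Relation.TransGen (fun a c => a ∈ Nbr c) a i → y a = 1 / 2 := by
    intro a hai
    induction hai using Relation.TransGen.head_induction_on with
    | single ha =>
      exact nbr_eq_half_of_F_eq_of_lt_one hw hne hwii hb hy (congr_fun hfix i) hlt _ ha
    | head ha _ hc =>
      refine nbr_eq_half_of_F_eq_of_lt_one hw hne hwii hb hy (congr_fun hfix _) ?_ _ ha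
      linarith
  linarith [hhalf j (hsc j i)]

end Network

theorem stmt8 {N : ℕ} (w : Fin N → Fin N → ℝ) (Nbr : Fin N → Finset (Fin N)) (b : Fin N → ℝ)
    (hsc : StronglyConnected Nbr)
    (hw : ∀ i, ∀ j ∈ Nbr i, 0 < w i j) (hwii : ∀ i, 0 ≤ w i i) (hb : ∀ i, 1 ≤ b i)
    (x : ℕ → Fin N → ℝ) (hupd : ∀ k, x (k + 1) = F w Nbr b (x k))
    (h0 : ∀ i, 1/2 ≤ x 0 i ∧ x 0 i ≤ 1) (hj : ∃ j, 1/2 < x 0 j) :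
    ∀ i, Tendsto (fun k => x k i) atTop (nhds 1) := by
  have hne := hsc.nbr_nonempty
  have hx : ∀ k i, 1 / 2 ≤ x k i ∧ x k i ≤ 1 := by
    intro k
    induction k with
    | zero => exact h0
    | succ k ih =>
      rw [hupd]
      exact fun i => ⟨(ih i).1.trans (le_F hw hne hwii hb ih i), F_le_one hw hne hwii ih i⟩
  have hmono : Monotone x :=
    monotone_nat_of_le_succ fun k => (hupd k).symm ▸ le_F hw hne hwii hb (hx k)
  have hbdd : BddAbove (Set.range x) := ⟨1, by rintro _ ⟨k, rfl⟩ i; exact (hx k i).2⟩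
  set L := ⨆ k, x k
  have hlim : Tendsto x atTop (𝓝 L) := tendsto_atTop_ciSup hmono hbdd
  have hL : ∀ i, 1 / 2 ≤ L i ∧ L i ≤ 1 := fun i =>
    ⟨(h0 i).1.trans (le_ciSup hbdd 0 i), (ciSup_le (fun k i => (hx k i).2) : L ≤ 1) i⟩
  have hfix : F w Nbr b L = L := by
    refine tendsto_nhds_unique ((continuousAt_F hw hne hwii hb hL).tendsto.comp hlim) ?_
    simpa only [Function.comp_def, hupd] using hlim.comp (tendsto_add_atTop_nat 1)
  obtain ⟨j, hj⟩ := hj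
  intro i
  exact eq_one_of_F_eq hsc hw hwii hb hL hfix (hj.trans_le (le_ciSup hbdd 0 j)) i ▸
    tendsto_pi_nhds.mp hlim i
end

section
/- Consider the biased assimilation model with $b_i \ge 1$ for all $i$ on a strongly connected graph. If $x_i(0) \le 1/2$ for all $i$ and $x_j(0) < 1/2$ for at least one $j$, then $x_i(k) \to 0$ as $k \to \infty$ for every $i$. -/
open Finset Filter Topology

/-!
Each coordinate of the trajectory decreases and stays in `[0, 1/2]`: when `x_i ≤ 1/2` and
`b_i ≥ 1` one has `x_i^{b_i - 1} ≤ (1 - x_i)^{b_i - 1}`, and `s_i ≤ d_i / 2`, so the upward pull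
`x_i^{b_i} s_i (1 - x_i)` is dominated by the downward pull `x_i (1 - x_i)^{b_i} (d_i - s_i)`.
Hence `x(k)` converges to a fixed point `L` of the update map. At a fixed point the two pulls
balance, which for `L_i > 0` forces every in-neighbour of `i` to sit at `1/2`. Since `L_j < 1/2`
for some `j`, strong connectivity spreads `L < 1/2` to every node, and then `L = 0`.
-/

open Function

namespace StronglyConnected

variable {N : ℕ} {Nbr : Fin N → Finset (Fin N)}

theorem nonempty (hsc : StronglyConnected Nbr) (i : Fin N) : (Nbr i).Nonempty := by
  cases hsc i i with
  | single h => exact ⟨i, h⟩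
  | tail _ h => exact ⟨_, h⟩

theorem forall_of_step (hsc : StronglyConnected Nbr) {P : Fin N → Prop} {j : Fin N} (hj : P j)
    (hstep : ∀ a c, a ∈ Nbr c → P a → P c) (i : Fin N) : P i := by
  induction hsc j i with
  | single h => exact hstep _ _ h hj
  | tail _ h ih => exact hstep _ _ h ih

end StronglyConnected

theorem Real.rpow_eq_rpow_sub_one_mul {t p : ℝ} (ht : 0 ≤ t) (hp : 1 ≤ p) :
    t ^ p = t ^ (p - 1) * t := by
  simpa using Real.rpow_add_one' ht (y := p - 1) (by linarith)

section BiasedAssimilation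

variable {N : ℕ} (w : Fin N → Fin N → ℝ) (Nbr : Fin N → Finset (Fin N)) (b : Fin N → ℝ)
  {x : Fin N → ℝ} {i : Fin N}

theorem wsum_nonneg (hw : ∀ j ∈ Nbr i, 0 ≤ w i j) (hx : ∀ j, 0 ≤ x j) : 0 ≤ wsum w Nbr x i :=
  sum_nonneg fun j hj => mul_nonneg (hw j hj) (hx j)

theorem degw_pos (hne : (Nbr i).Nonempty) (hw : ∀ j ∈ Nbr i, 0 < w i j) : 0 < degw w Nbr i :=
  sum_pos hw hne

theorem degw_sub_two_mul_wsum (x : Fin N → ℝ) (i : Fin N) :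
    degw w Nbr i - 2 * wsum w Nbr x i = ∑ j ∈ Nbr i, w i j * (1 - 2 * x j) := by
  simp only [degw, wsum, mul_sum, ← sum_sub_distrib]
  exact sum_congr rfl fun j _ => by ring

theorem two_mul_wsum_le_degw (hw : ∀ j ∈ Nbr i, 0 ≤ w i j) (hx : ∀ j, x j ≤ 1 / 2) :
    2 * wsum w Nbr x i ≤ degw w Nbr i := by
  rw [← sub_nonneg, degw_sub_two_mul_wsum]
  exact sum_nonneg fun j hj => mul_nonneg (hw j hj) (by linarith [hx j])

theorem eq_half_of_two_mul_wsum_eq_degw (hw : ∀ j ∈ Nbr i, 0 < w i j) (hx : ∀ j, x j ≤ 1 / 2)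
    (heq : 2 * wsum w Nbr x i = degw w Nbr i) : ∀ j ∈ Nbr i, x j = 1 / 2 := by
  have hsum : ∑ j ∈ Nbr i, w i j * (1 - 2 * x j) = 0 := by
    rw [← degw_sub_two_mul_wsum, heq, sub_self]
  intro j hj
  have hterm := (sum_eq_zero_iff_of_nonneg fun j hj =>
    mul_nonneg (hw j hj).le (by linarith [hx j])).1 hsum j hj
  have := (mul_eq_zero.1 hterm).resolve_left (hw j hj).ne'
  linarith

noncomputable def Fden (x : Fin N → ℝ) (i : Fin N) : ℝ :=
  w i i + x i ^ b i * wsum w Nbr x i + (1 - x i) ^ b i * (degw w Nbr i - wsum w Nbr x i)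

theorem F_eq_div (x : Fin N → ℝ) (i : Fin N) :
    F w Nbr b x i = (w i i * x i + x i ^ b i * wsum w Nbr x i) / Fden w Nbr b x i :=
  rfl

theorem Fden_pos (hne : (Nbr i).Nonempty) (hw : ∀ j ∈ Nbr i, 0 < w i j) (hwii : 0 ≤ w i i)
    (hx : ∀ j, x j ∈ Set.Icc (0 : ℝ) (1 / 2)) : 0 < Fden w Nbr b x i := by
  have hs := wsum_nonneg w Nbr (fun j hj => (hw j hj).le) fun j => (hx j).1
  have hsd := two_mul_wsum_le_degw w Nbr (fun j hj => (hw j hj).le) fun j => (hx j).2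
  have hd := degw_pos w Nbr hne hw
  have hpull_up : 0 ≤ x i ^ b i * wsum w Nbr x i :=
    mul_nonneg (Real.rpow_nonneg (hx i).1 _) hs
  have hpull_down : 0 < (1 - x i) ^ b i * (degw w Nbr i - wsum w Nbr x i) :=
    mul_pos (Real.rpow_pos_of_pos (by linarith [(hx i).2]) _) (by linarith)
  rw [Fden]
  linarith

theorem self_sub_F_eq (hden : Fden w Nbr b x i ≠ 0) (hb : 1 ≤ b i)
    (hx : x i ∈ Set.Icc (0 : ℝ) 1) :
    x i - F w Nbr b x i = x i * (1 - x i) *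
      ((1 - x i) ^ (b i - 1) * (degw w Nbr i - wsum w Nbr x i) -
        x i ^ (b i - 1) * wsum w Nbr x i) / Fden w Nbr b x i := by
  rw [F_eq_div, eq_div_iff hden, sub_mul, div_mul_cancel₀ _ hden, Fden,
    Real.rpow_eq_rpow_sub_one_mul hx.1 hb,
    Real.rpow_eq_rpow_sub_one_mul (sub_nonneg.2 hx.2) hb]
  ring

theorem drop_le_self_sub_F (hne : (Nbr i).Nonempty) (hw : ∀ j ∈ Nbr i, 0 < w i j)
    (hwii : 0 ≤ w i i) (hb : 1 ≤ b i) (hx : ∀ j, x j ∈ Set.Icc (0 : ℝ) (1 / 2)) :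
    x i * (1 - x i) ^ b i * (degw w Nbr i - 2 * wsum w Nbr x i) / Fden w Nbr b x i ≤
      x i - F w Nbr b x i := by
  have hden := Fden_pos w Nbr b hne hw hwii hx
  have hxi : x i ∈ Set.Icc (0 : ℝ) 1 := ⟨(hx i).1, by linarith [(hx i).2]⟩
  have hs := wsum_nonneg w Nbr (fun j hj => (hw j hj).le) fun j => (hx j).1
  have hpow : x i ^ (b i - 1) ≤ (1 - x i) ^ (b i - 1) :=
    Real.rpow_le_rpow hxi.1 (by linarith [(hx i).2]) (by linarith)
  rw [self_sub_F_eq w Nbr b hden.ne' hb hxi,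
    Real.rpow_eq_rpow_sub_one_mul (sub_nonneg.2 hxi.2) hb]
  gcongr ?_ / _
  have := mul_le_mul_of_nonneg_right hpow hs
  have : 0 ≤ x i * (1 - x i) := mul_nonneg hxi.1 (sub_nonneg.2 hxi.2)
  nlinarith

theorem F_mem_Icc (hne : (Nbr i).Nonempty) (hw : ∀ j ∈ Nbr i, 0 < w i j) (hwii : 0 ≤ w i i)
    (hb : 1 ≤ b i) (hx : ∀ j, x j ∈ Set.Icc (0 : ℝ) (1 / 2)) :
    F w Nbr b x i ∈ Set.Icc 0 (x i) := by
  have hden := Fden_pos w Nbr b hne hw hwii hx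
  have hs := wsum_nonneg w Nbr (fun j hj => (hw j hj).le) fun j => (hx j).1
  have hsd := two_mul_wsum_le_degw w Nbr (fun j hj => (hw j hj).le) fun j => (hx j).2
  have hdrop := drop_le_self_sub_F w Nbr b hne hw hwii hb hx
  have : 0 ≤ x i * (1 - x i) ^ b i * (degw w Nbr i - 2 * wsum w Nbr x i) / Fden w Nbr b x i :=
    div_nonneg (mul_nonneg (mul_nonneg (hx i).1
      (Real.rpow_nonneg (by linarith [(hx i).2]) _)) (by linarith)) hden.le
  refine ⟨?_, by linarith⟩
  rw [F_eq_div]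
  exact div_nonneg (add_nonneg (mul_nonneg hwii (hx i).1)
    (mul_nonneg (Real.rpow_nonneg (hx i).1 _) hs)) hden.le

theorem eq_half_of_F_eq_self (hne : (Nbr i).Nonempty) (hw : ∀ j ∈ Nbr i, 0 < w i j)
    (hwii : 0 ≤ w i i) (hb : 1 ≤ b i) (hx : ∀ j, x j ∈ Set.Icc (0 : ℝ) (1 / 2))
    (hfix : F w Nbr b x i = x i) (hpos : 0 < x i) : ∀ j ∈ Nbr i, x j = 1 / 2 := by
  have hden := Fden_pos w Nbr b hne hw hwii hx
  have hsd := two_mul_wsum_le_degw w Nbr (fun j hj => (hw j hj).le) fun j => (hx j).2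
  have hdrop := drop_le_self_sub_F w Nbr b hne hw hwii hb hx
  have hfactor : 0 < x i * (1 - x i) ^ b i :=
    mul_pos hpos (Real.rpow_pos_of_pos (by linarith [(hx i).2]) _)
  have hnum : x i * (1 - x i) ^ b i * (degw w Nbr i - 2 * wsum w Nbr x i) ≤ 0 := by
    simpa [hfix] using (div_le_iff₀ hden).1 hdrop
  exact eq_half_of_two_mul_wsum_eq_degw w Nbr hw (fun j => (hx j).2)
    (le_antisymm hsd (by nlinarith))

theorem continuousAt_F_apply (hb : 0 ≤ b i) (hden : Fden w Nbr b x i ≠ 0) :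
    ContinuousAt (fun y => F w Nbr b y i) x := by
  have hy : Continuous fun y : Fin N → ℝ => y i := continuous_apply i
  have hs : Continuous fun y => wsum w Nbr y i :=
    continuous_finsetSum _ fun j _ => continuous_const.mul (continuous_apply j)
  have hpow : Continuous fun y : Fin N → ℝ => y i ^ b i := hy.rpow_const fun _ => Or.inr hb
  have hpow' : Continuous fun y : Fin N → ℝ => (1 - y i) ^ b i :=
    (continuous_const.sub hy).rpow_const fun _ => Or.inr hb
  exact (((continuous_const.mul hy).add (hpow.mul hs)).continuousAt).div
    (((continuous_const.add (hpow.mul hs)).add (hpow'.mul (continuous_const.sub hs))).continuousAt)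
    hden

variable {w Nbr b}

theorem eq_zero_of_isFixedPt_F (hsc : StronglyConnected Nbr) (hw : ∀ i, ∀ j ∈ Nbr i, 0 < w i j)
    (hwii : ∀ i, 0 ≤ w i i) (hb : ∀ i, 1 ≤ b i) (hx : ∀ j, x j ∈ Set.Icc (0 : ℝ) (1 / 2))
    (hfix : IsFixedPt (F w Nbr b) x) (hj : ∃ j, x j < 1 / 2) : x = 0 := by
  have hhalf : ∀ c, 0 < x c → ∀ a ∈ Nbr c, x a = 1 / 2 := fun c =>
    eq_half_of_F_eq_self w Nbr b (hsc.nonempty c) (hw c) (hwii c) (hb c) hx (congrFun hfix c)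
  obtain ⟨j, hj⟩ := hj
  have hlt : ∀ i, x i < 1 / 2 := hsc.forall_of_step hj fun a c hac ha => by
    by_contra! hc
    exact ha.ne (hhalf c (by linarith) a hac)
  funext i
  obtain ⟨a, ha⟩ := hsc.nonempty i
  by_contra! hi
  exact (hlt a).ne (hhalf i (lt_of_le_of_ne (hx i).1 hi.symm) a ha)

end BiasedAssimilation

theorem stmt9 {N : ℕ} (w : Fin N → Fin N → ℝ) (Nbr : Fin N → Finset (Fin N)) (b : Fin N → ℝ)
    (hsc : StronglyConnected Nbr)
    (hw : ∀ i, ∀ j ∈ Nbr i, 0 < w i j) (hwii : ∀ i, 0 ≤ w i i) (hb : ∀ i, 1 ≤ b i)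
    (x : ℕ → Fin N → ℝ) (hupd : ∀ k, x (k + 1) = F w Nbr b (x k))
    (h0 : ∀ i, 0 ≤ x 0 i ∧ x 0 i ≤ 1/2) (hj : ∃ j, x 0 j < 1/2) :
    ∀ i, Tendsto (fun k => x k i) atTop (nhds 0) := by
  have hstep : ∀ k, (∀ i, x k i ∈ Set.Icc (0 : ℝ) (1 / 2)) →
      ∀ i, x (k + 1) i ∈ Set.Icc 0 (x k i) :=
    fun k hk i => hupd k ▸ F_mem_Icc w Nbr b (hsc.nonempty i) (hw i) (hwii i) (hb i) hk
  have hinv : ∀ k i, x k i ∈ Set.Icc (0 : ℝ) (1 / 2) := by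
    intro k
    induction k with
    | zero => exact h0
    | succ k ih => exact fun i => ⟨(hstep k ih i).1, (hstep k ih i).2.trans (ih i).2⟩
  have hanti : Antitone x := antitone_nat_of_succ_le fun k i => (hstep k (hinv k) i).2
  have hlim : Tendsto x atTop (𝓝 (⨅ k, x k)) :=
    tendsto_atTop_ciInf hanti ⟨0, fun _ ⟨k, hk⟩ i => hk ▸ (hinv k i).1⟩
  set L := ⨅ k, x k
  have hL : ∀ i, L i ∈ Set.Icc (0 : ℝ) (1 / 2) := fun i =>
    ⟨ge_of_tendsto' (tendsto_pi_nhds.1 hlim i) fun k => (hinv k i).1,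
      (hanti.le_of_tendsto hlim 0 i).trans (h0 i).2⟩
  have hfix : IsFixedPt (F w Nbr b) L := by
    have hiter : ∀ k, x k = (F w Nbr b)^[k] (x 0) := fun k => by
      induction k with
      | zero => rfl
      | succ k ih => rw [hupd, ih, iterate_succ_apply']
    refine isFixedPt_of_tendsto_iterate (x := x 0) (by simpa only [← hiter] using hlim) ?_
    exact continuousAt_pi.2 fun i => continuousAt_F_apply w Nbr b (by linarith [hb i])
      (Fden_pos w Nbr b (hsc.nonempty i) (hw i) (hwii i) hL).ne'
  obtain ⟨j, hj⟩ := hj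
  have hLzero := eq_zero_of_isFixedPt_F hsc hw hwii hb hL hfix
    ⟨j, (hanti.le_of_tendsto hlim 0 j).trans_lt hj⟩
  rw [hLzero] at hlim
  exact tendsto_pi_nhds.1 hlim
end

section
/- In the biased assimilation model on a strongly connected graph with $b_i > 0$ and each agent having at least one neighbor, the Jacobian of the update map at the fixed point $x = \mathbf{0}$ is the diagonal matrix with entries $w_{ii}/(w_{ii} + d_i)$, and its spectral radius is strictly less than 1. Hence $\mathbf{0}$ is a locally exponentially stable fixed point. -/
open Finset Filter Topology

/-! At `0` the `i`-th component of `F` is a quotient whose numerator `w_ii y_i + y_i^{b_i} s_i`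
vanishes and whose denominator tends to `w_ii + d_i > 0`. The biased term is a continuous factor
vanishing at `0` times a linear form, so it has zero derivative there even when `b_i < 1`; hence
`F` is differentiable at `0`, its derivative being multiplication by `c_l = w_ll / (w_ll + d_l)`.
Its operator norm in the sup norm, like the spectral radius of `diag c`, is at most
`max_l |c_l| < 1`, and a map whose derivative at a fixed point has norm `< 1` contracts towards
it nearby. -/

open Asymptotics

theorem HasFDerivAt.mul_of_eq_zero {E : Type*} [NormedAddCommGroup E] [NormedSpace ℝ E]
    {n c : E → ℝ} {n' : E →L[ℝ] ℝ} {x : E}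
    (hn : HasFDerivAt n n' x) (hnx : n x = 0) (hc : ContinuousAt c x) :
    HasFDerivAt (fun y => n y * c y) (c x • n') x := by
  rw [hasFDerivAt_iff_isLittleO_nhds_zero]
  have hrem : (fun h => n (x + h) - n' h) =o[𝓝 0] fun h => ‖h‖ := by
    simpa [hnx] using (hasFDerivAt_iff_isLittleO_nhds_zero.mp hn).norm_right
  have hc0 : Tendsto (fun h => c (x + h)) (𝓝 0) (𝓝 (c x)) :=
    hc.tendsto.comp (by simpa using (continuous_const_add x).tendsto 0)
  have hcd : (fun h => c (x + h) - c x) =o[𝓝 (0 : E)] fun _ => (1 : ℝ) := by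
    rwa [isLittleO_one_iff, tendsto_sub_nhds_zero_iff]
  -- `n (x+h) c (x+h) - c x n' h = (n (x+h) - n' h) c (x+h) + n' h (c (x+h) - c x)`
  have hsplit := (hrem.mul_isBigO (hc0.isBigO_one ℝ)).add
    ((n'.isBigO_id (𝓝 0)).norm_right.mul_isLittleO hcd)
  refine isLittleO_norm_right.mp ((hsplit.congr_left fun h => ?_).congr_right (by simp))
  simp [hnx]
  ring

theorem LocExpStable.of_contraction {E : Type*} [NormedAddCommGroup E] {G : E → E} {q : E}
    {δ r : ℝ} (hδ : 0 < δ) (hr0 : 0 ≤ r) (hr1 : r < 1)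
    (h : ∀ x, ‖x - q‖ ≤ δ → ‖G x - q‖ ≤ r * ‖x - q‖) : LocExpStable G q := by
  refine ⟨δ, hδ, 1, one_pos, r, hr0, hr1, fun x hx k => ?_⟩
  induction k generalizing x with
  | zero => simp
  | succ k ih =>
    have hGx : ‖G x - q‖ ≤ r * ‖x - q‖ := h x hx
    have hGxδ : ‖G x - q‖ ≤ δ := hGx.trans (by nlinarith [norm_nonneg (x - q)])
    rw [Function.iterate_succ_apply]
    calc ‖G^[k] (G x) - q‖ ≤ 1 * r ^ k * ‖G x - q‖ := ih (G x) hGxδ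
      _ ≤ 1 * r ^ k * (r * ‖x - q‖) := by gcongr
      _ = 1 * r ^ (k + 1) * ‖x - q‖ := by ring

theorem LocExpStable.of_hasFDerivAt {E : Type*} [NormedAddCommGroup E] [NormedSpace ℝ E]
    {G : E → E} {q : E} {A : E →L[ℝ] E} (hG : HasFDerivAt G A q) (hq : G q = q)
    (hA : ‖A‖ < 1) : LocExpStable G q := by
  have hε : 0 < (1 - ‖A‖) / 2 := by linarith
  obtain ⟨ρ, hρ, hball⟩ := Metric.eventually_nhds_iff.mp (hG.isLittleO.def hε)
  refine .of_contraction (half_pos hρ) (by positivity) (by linarith : (1 + ‖A‖) / 2 < 1)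
    fun x hx => ?_
  have hrem := @hball x (by rw [dist_eq_norm]; linarith)
  rw [hq] at hrem
  calc ‖G x - q‖ = ‖(G x - q - A (x - q)) + A (x - q)‖ := by rw [sub_add_cancel]
    _ ≤ (1 - ‖A‖) / 2 * ‖x - q‖ + ‖A‖ * ‖x - q‖ := norm_add_le_of_le hrem (A.le_opNorm _)
    _ = (1 + ‖A‖) / 2 * ‖x - q‖ := by ring

theorem specRad_diagonal_le_norm {n : ℕ} (d : Fin n → ℝ) :
    specRad (Matrix.diagonal d) ≤ ‖d‖ := by
  refine Real.sSup_le ?_ (norm_nonneg d)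
  rintro r ⟨μ, hμ, rfl⟩
  rw [Matrix.diagonal_map (by simp), Matrix.charpoly_diagonal, Polynomial.IsRoot.def,
    Polynomial.eval_prod, prod_eq_zero_iff] at hμ
  obtain ⟨l, -, hl⟩ := hμ
  rw [Polynomial.eval_sub, Polynomial.eval_X, Polynomial.eval_C, sub_eq_zero] at hl
  rw [hl, Complex.norm_real]
  exact norm_le_pi_norm d l

section BiasedAssimilation

variable {N : ℕ} (w : Fin N → Fin N → ℝ) (Nbr : Fin N → Finset (Fin N)) (b : Fin N → ℝ)

theorem wsum_zero (i : Fin N) : wsum w Nbr 0 i = 0 := by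
  simp [wsum]

theorem hasFDerivAt_wsum (x : Fin N → ℝ) (i : Fin N) :
    HasFDerivAt (fun y => wsum w Nbr y i)
      (∑ j ∈ Nbr i, w i j • (ContinuousLinearMap.proj j : (Fin N → ℝ) →L[ℝ] ℝ)) x :=
  HasFDerivAt.fun_sum fun j _ => (hasFDerivAt_apply j x).const_mul (w i j)

theorem F_zero : F w Nbr b 0 = 0 := by
  funext i
  simp [F, wsum_zero]

theorem hasFDerivAt_F_apply_zero {i : Fin N} (hb : 0 < b i)
    (hden : w i i + degw w Nbr i ≠ 0) :
    HasFDerivAt (fun y => F w Nbr b y i)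
      ((w i i / (w i i + degw w Nbr i)) •
        (ContinuousLinearMap.proj i : (Fin N → ℝ) →L[ℝ] ℝ)) 0 := by
  have hpow : ContinuousAt (fun y : Fin N → ℝ => y i ^ b i) 0 :=
    (continuous_apply i).continuousAt.rpow_const (Or.inr hb.le)
  have hbias :
      HasFDerivAt (fun y => y i ^ b i * wsum w Nbr y i) (0 : (Fin N → ℝ) →L[ℝ] ℝ) 0 := by
    simpa [mul_comm, Real.zero_rpow hb.ne'] using
      (hasFDerivAt_wsum w Nbr 0 i).mul_of_eq_zero (wsum_zero w Nbr i) hpow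
  have hnum : HasFDerivAt (fun y => w i i * y i + y i ^ b i * wsum w Nbr y i)
      (w i i • (ContinuousLinearMap.proj i : (Fin N → ℝ) →L[ℝ] ℝ)) 0 := by
    simpa using ((hasFDerivAt_apply i 0).const_mul (w i i)).fun_add hbias
  let den : (Fin N → ℝ) → ℝ := fun y =>
    w i i + y i ^ b i * wsum w Nbr y i + (1 - y i) ^ b i * (degw w Nbr i - wsum w Nbr y i)
  have hden0 : den 0 = w i i + degw w Nbr i := by simp [den, wsum_zero, Real.zero_rpow hb.ne']
  have hcont : ContinuousAt den 0 := by
    have hs := (hasFDerivAt_wsum w Nbr 0 i).continuousAt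
    have hpow' : ContinuousAt (fun y : Fin N → ℝ => (1 - y i) ^ b i) 0 :=
      (continuous_const.sub (continuous_apply i)).continuousAt.rpow_const (Or.inl (by simp))
    exact (continuousAt_const.add (hpow.mul hs)).add (hpow'.mul (continuousAt_const.sub hs))
  have hquot := hnum.mul_of_eq_zero (by simp [wsum_zero]) (hcont.inv₀ (hden0 ▸ hden))
  rw [Pi.inv_apply, hden0, smul_smul, ← div_eq_inv_mul] at hquot
  exact hquot.congr_of_eventuallyEq (.of_forall fun y => div_eq_mul_inv _ _)

end BiasedAssimilation

theorem stmt12_general {N : ℕ} (w : Fin N → Fin N → ℝ) (Nbr : Fin N → Finset (Fin N)) (b : Fin N → ℝ)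
    (hwii : ∀ i, 0 ≤ w i i)
    (hd : ∀ i, 0 < degw w Nbr i) (hb : ∀ i, 0 < b i) :
    (∀ i j, fderiv ℝ (fun y => F w Nbr b y i) (fun _ => (0 : ℝ)) (Pi.single j 1)
        = Matrix.diagonal (fun l => w l l / (w l l + degw w Nbr l)) i j) ∧
    specRad (Matrix.diagonal (fun l => w l l / (w l l + degw w Nbr l))) < 1 ∧
    LocExpStable (F w Nbr b) (fun _ => 0) := by
  set c : Fin N → ℝ := fun l => w l l / (w l l + degw w Nbr l)
  have hden : ∀ l, 0 < w l l + degw w Nbr l := fun l => add_pos_of_nonneg_of_pos (hwii l) (hd l)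
  have hc : ‖c‖ < 1 := (pi_norm_lt_iff one_pos).2 fun l => by
    rw [Real.norm_eq_abs, abs_of_nonneg (div_nonneg (hwii l) (hden l).le),
      div_lt_one (hden l)]
    linarith [hd l]
  have hderiv (i : Fin N) := hasFDerivAt_F_apply_zero w Nbr b (hb i) (hden i).ne'
  have hF : HasFDerivAt (F w Nbr b) (ContinuousLinearMap.mul ℝ (Fin N → ℝ) c) 0 :=
    hasFDerivAt_pi'.2 fun i => (hderiv i).congr_fderiv (by ext; simp [c])
  refine ⟨fun i j => ?_, (specRad_diagonal_le_norm c).trans_lt hc,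
    .of_hasFDerivAt hF (F_zero w Nbr b)
      ((ContinuousLinearMap.opNorm_mul_apply_le ℝ (Fin N → ℝ) c).trans_lt hc)⟩
  change fderiv ℝ _ 0 _ = _
  rw [(hderiv i).fderiv]
  by_cases hij : i = j
  · subst hij; simp [c]
  · simp [Matrix.diagonal_apply_ne _ hij, Pi.single_eq_of_ne hij]

theorem stmt12 {N : ℕ} (w : Fin N → Fin N → ℝ) (Nbr : Fin N → Finset (Fin N)) (b : Fin N → ℝ)
    (hsc : StronglyConnected Nbr) (hne : ∀ i, (Nbr i).Nonempty)
    (hw : ∀ i, ∀ j ∈ Nbr i, 0 < w i j) (hwii : ∀ i, 0 ≤ w i i)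
    (hd : ∀ i, 0 < degw w Nbr i) (hb : ∀ i, 0 < b i) :
    (∀ i j, fderiv ℝ (fun y => F w Nbr b y i) (fun _ => (0 : ℝ)) (Pi.single j 1)
        = Matrix.diagonal (fun l => w l l / (w l l + degw w Nbr l)) i j) ∧
    specRad (Matrix.diagonal (fun l => w l l / (w l l + degw w Nbr l))) < 1 ∧
    LocExpStable (F w Nbr b) (fun _ => 0) :=
  stmt12_general w Nbr b hwii hd hb
end

section
/- For the biased assimilation model on the undirected complete graph on $N$ vertices with all weights $w_{ij} = 1$ ($i \ne j$), $w_{ii} \ge 0$, and $b_i = 1$ for all $i$: at the polarization fixed point with $n_1$ agents at $0$ and $n_2 = N - n_1$ agents at $1$ (where $2 \le n_1 \le N-2$), the Jacobian is diagonal with entries $(w_{ii} + n_2)/(w_{ii} + n_1 - 1)$ for agents at $0$ and $(w_{ii} + n_1)/(w_{ii} + n_2 - 1)$ for agents at $1$; at least one entry exceeds $1$, so the fixed point is unstable. -/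
open Finset Filter Topology

/-!
An agent at `0` stays at `0` whatever the others do, and an agent at `1` stays at `1` as long as
its total input `w_ii + s_i` is nonzero. So on the complete graph, near a polarization point,
agent `i` only feels its own coordinate `c`, through `c ↦ (W + s) c / (W + s c + (m - s)(1 - c))` with `s` the number
of other agents at `1` and `m = N - 1`, and the Jacobian is diagonal with the slopes of these maps
at `0` or `1`. The map for `s` is conjugate under `c ↦ 1 - c` to the map for `m - s`, so an agent at
`1` behaves like an agent at `0` with the two groups exchanged. For an agent of the smaller group
(of either group if they have equal size) the slope exceeds `1`, and the map then expands the
distance to the fixed point by a uniform factor `r > 1` on an interval of length `1/2`: perturbing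
that agent alone pushes the orbit away.
-/

theorem not_lyapStable_of_expanding {E : Type*} [NormedAddCommGroup E] {G : E → E} {q : E}
    {ℓ : ℝ → E} {φ : ℝ → ℝ} {ρ r : ℝ} (hρ : 0 < ρ) (hr : 1 < r)
    (hℓ : ∀ d, ‖ℓ d - q‖ = |d|) (hG : ∀ d, 0 < d → d ≤ ρ → G (ℓ d) = ℓ (φ d))
    (hφ : ∀ d, 0 < d → d ≤ ρ → r * d ≤ φ d) : ¬ LyapStable G q := by
  intro hstab
  obtain ⟨δ, hδ, hδ'⟩ := hstab ρ hρ
  set d₀ := min (δ / 2) ρ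
  have hd₀ : 0 < d₀ := lt_min (half_pos hδ) hρ
  have hclose : ∀ k, ‖G^[k] (ℓ d₀) - q‖ < ρ :=
    hδ' _ (by rw [hℓ, abs_of_pos hd₀]; exact (min_le_left _ _).trans_lt (half_lt_self hδ))
  have horbit (k : ℕ) : G^[k] (ℓ d₀) = ℓ (φ^[k] d₀) ∧ r ^ k * d₀ ≤ φ^[k] d₀ := by
    induction k with
    | zero => simp
    | succ k ih =>
      have hpos : 0 < φ^[k] d₀ := (by positivity : 0 < r ^ k * d₀).trans_le ih.2
      have hle : φ^[k] d₀ ≤ ρ := by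
        have h := hclose k
        rw [ih.1, hℓ] at h
        exact (le_abs_self _).trans h.le
      rw [Function.iterate_succ_apply', Function.iterate_succ_apply', ih.1, hG _ hpos hle]
      refine ⟨rfl, ?_⟩
      calc r ^ (k + 1) * d₀ = r * (r ^ k * d₀) := by ring
        _ ≤ r * φ^[k] d₀ := by gcongr; exact ih.2
        _ ≤ φ (φ^[k] d₀) := hφ _ hpos hle
  obtain ⟨k, hk⟩ := pow_unbounded_of_one_lt (ρ / d₀) hr
  have h := hclose k
  rw [(horbit k).1, hℓ] at h
  linarith [(div_lt_iff₀ hd₀).1 hk, le_abs_self (φ^[k] d₀), (horbit k).2]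

theorem norm_update_sub_self {ι : Type*} [Fintype ι] [DecidableEq ι] {G : Type*}
    [NormedAddCommGroup G] (x : ι → G) (i : ι) (a : G) :
    ‖Function.update x i a - x‖ = ‖a - x i‖ := by
  have h : Function.update x i a - x = Pi.single i (a - x i) := by
    ext k
    rcases eq_or_ne k i with rfl | hki <;> simp [*]
  rw [h, Pi.norm_single]

theorem sum_eq_card_filter_ne_zero {ι : Type*} [Fintype ι] {x : ι → ℝ}
    (hx : ∀ j, x j = 0 ∨ x j = 1) : ∑ j, x j = #{j | x j ≠ 0} := by
  rw [← sum_boole]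
  exact sum_congr rfl fun j _ => by rcases hx j with h | h <;> simp [h]

noncomputable def agentUpdate (W s m c : ℝ) : ℝ :=
  (W + s) * c / (W + s * c + (m - s) * (1 - c))

theorem agentUpdate_one_sub {W s m d : ℝ} (hD : W + s * (1 - d) + (m - s) * d ≠ 0) :
    agentUpdate W s m (1 - d) = 1 - agentUpdate W (m - s) m d := by
  have hden : W + (m - s) * d + (m - (m - s)) * (1 - d) = W + s * (1 - d) + (m - s) * d := by
    ring
  rw [agentUpdate, agentUpdate, sub_sub_cancel, hden, eq_sub_iff_add_eq, ← add_div,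
    div_eq_one_iff_eq hD]
  ring

theorem hasDerivAt_agentUpdate {W s m c : ℝ} (hD : W + s * c + (m - s) * (1 - c) ≠ 0) :
    HasDerivAt (agentUpdate W s m)
      ((W + s) * (W + (m - s)) / (W + s * c + (m - s) * (1 - c)) ^ 2) c := by
  have hnum : HasDerivAt (fun c => (W + s) * c) (W + s) c := by
    simpa using (hasDerivAt_id c).const_mul (W + s)
  have hden : HasDerivAt (fun c => W + s * c + (m - s) * (1 - c)) (s - (m - s)) c :=
    ((((hasDerivAt_id c).const_mul s).const_add W).fun_add
      (((hasDerivAt_id c).const_sub 1).const_mul (m - s))).congr_deriv (by ring)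
  exact (hnum.fun_div hden hD).congr_deriv (by ring)

theorem hasDerivAt_agentUpdate_neighbors {W s m c : ℝ} (hc : c = 0 ∨ c = 1)
    (hD : W + s * c + (m - s) * (1 - c) ≠ 0) :
    HasDerivAt (fun s => agentUpdate W s m c) 0 s := by
  have hnum : HasDerivAt (fun s => (W + s) * c) c s := by
    simpa using ((hasDerivAt_id s).const_add W).mul_const c
  have hden : HasDerivAt (fun s => W + s * c + (m - s) * (1 - c)) (c - (1 - c)) s :=
    ((((hasDerivAt_id s).mul_const c).const_add W).fun_add
      (((hasDerivAt_id s).const_sub m).mul_const (1 - c))).congr_deriv (by ring)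
  exact (hnum.fun_div hden hD).congr_deriv (by rcases hc with rfl | rfl <;> ring)

noncomputable def polarizedEntry (W s m c : ℝ) : ℝ :=
  if c = 0 then (W + s) / (W + (m - s)) else (W + (m - s)) / (W + s)

theorem deriv_agentUpdate_of_polarized {W s m c : ℝ} (hc : c = 0 ∨ c = 1)
    (h₀ : W + (m - s) ≠ 0) (h₁ : W + s ≠ 0) :
    deriv (agentUpdate W s m) c = polarizedEntry W s m c := by
  rcases hc with rfl | rfl
  · have hden : W + s * 0 + (m - s) * (1 - 0) = W + (m - s) := by ring
    rw [(hasDerivAt_agentUpdate (hden ▸ h₀)).deriv, hden, polarizedEntry, if_pos rfl]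
    field_simp
  · have hden : W + s * 1 + (m - s) * (1 - 1) = W + s := by ring
    rw [(hasDerivAt_agentUpdate (hden ▸ h₁)).deriv, hden, polarizedEntry, if_neg one_ne_zero]
    field_simp

theorem mul_le_agentUpdate {W s m d : ℝ} (hW : 0 ≤ W) (hsm : s ≤ m) (hms : m < 2 * s)
    (hd : 0 < d) (hd' : d ≤ 1 / 2) :
    (W + s) / (W + m / 2) * d ≤ agentUpdate W s m d := by
  rw [agentUpdate, div_mul_eq_mul_div]
  apply div_le_div_of_nonneg_left (by nlinarith) (by nlinarith) (by nlinarith)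

theorem one_lt_div_of_lt_two_mul {W s m : ℝ} (hW : 0 ≤ W) (hsm : s ≤ m) (hms : m < 2 * s) :
    1 < (W + s) / (W + m / 2) := by
  rw [one_lt_div (by linarith)]
  linarith

section

variable {N : ℕ} {w : Fin N → Fin N → ℝ} {Nbr : Fin N → Finset (Fin N)} {b : Fin N → ℝ}

theorem F_apply_of_eq_zero {y : Fin N → ℝ} {i : Fin N} (hb : b i ≠ 0) (hy : y i = 0) :
    F w Nbr b y i = 0 := by
  simp [F, hy, Real.zero_rpow hb]

theorem F_apply_of_eq_one {y : Fin N → ℝ} {i : Fin N} (hb : b i ≠ 0) (hy : y i = 1)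
    (h : w i i + wsum w Nbr y i ≠ 0) : F w Nbr b y i = 1 := by
  simpa [F, hy, Real.zero_rpow hb] using div_self h

theorem cast_card_univ_erase (i : Fin N) : (#(univ.erase i) : ℝ) = N - 1 := by
  rw [card_erase_of_mem (mem_univ i), card_univ, Fintype.card_fin,
    Nat.cast_sub (Nat.one_le_of_lt i.pos), Nat.cast_one]

theorem degw_of_complete (hw : ∀ i j, i ≠ j → w i j = 1) (hNbr : ∀ i, Nbr i = univ.erase i)
    (i : Fin N) : degw w Nbr i = N - 1 := by
  rw [degw, hNbr, sum_congr rfl fun j hj => hw i j (ne_of_mem_erase hj).symm, sum_const,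
    nsmul_one, cast_card_univ_erase]

theorem wsum_of_complete (hw : ∀ i j, i ≠ j → w i j = 1) (hNbr : ∀ i, Nbr i = univ.erase i)
    (y : Fin N → ℝ) (i : Fin N) : wsum w Nbr y i = ∑ j ∈ univ.erase i, y j := by
  rw [wsum, hNbr]
  exact sum_congr rfl fun j hj => by rw [hw i j (ne_of_mem_erase hj).symm, one_mul]

theorem sum_univ_erase_nonneg {x : Fin N → ℝ} (hx : ∀ j, x j = 0 ∨ x j = 1) (i : Fin N) :
    0 ≤ ∑ k ∈ univ.erase i, x k :=
  sum_nonneg fun k _ => by rcases hx k with h | h <;> simp [h]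

theorem sum_univ_erase_le {x : Fin N → ℝ} (hx : ∀ j, x j = 0 ∨ x j = 1) (i : Fin N) :
    ∑ k ∈ univ.erase i, x k ≤ N - 1 := by
  refine (sum_le_card_nsmul _ _ 1 fun k _ => ?_).trans_eq (by rw [nsmul_one, cast_card_univ_erase])
  rcases hx k with h | h <;> simp [h]

theorem card_filter_ne_zero {x : Fin N → ℝ} {n : ℕ} (hcard : #{j | x j = 0} = n) :
    #{j | x j ≠ 0} = N - n := by
  have h := card_filter_add_card_filter_not (s := univ) (fun j => x j = 0)
  rw [hcard, card_univ, Fintype.card_fin] at h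
  simp only [ne_eq]
  omega

theorem sum_univ_erase_eq_of_polarized {x : Fin N → ℝ} (hx : ∀ j, x j = 0 ∨ x j = 1) {n : ℕ}
    (hcard : #{j | x j = 0} = n) (i : Fin N) :
    ∑ k ∈ univ.erase i, x k = ((N - n : ℕ) : ℝ) - x i := by
  rw [sum_erase_eq_sub (mem_univ i), sum_eq_card_filter_ne_zero hx, card_filter_ne_zero hcard]

theorem F_apply_of_complete (hw : ∀ i j, i ≠ j → w i j = 1) (hNbr : ∀ i, Nbr i = univ.erase i)
    (hb : ∀ i, b i = 1) (y : Fin N → ℝ) (i : Fin N) :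
    F w Nbr b y i = agentUpdate (w i i) (∑ j ∈ univ.erase i, y j) (N - 1) (y i) := by
  rw [F, agentUpdate, wsum_of_complete hw hNbr, degw_of_complete hw hNbr, hb, Real.rpow_one,
    Real.rpow_one]
  congr 1 <;> ring

theorem F_update_of_polarized (hw : ∀ i j, i ≠ j → w i j = 1) (hwii : ∀ i, 0 ≤ w i i)
    (hNbr : ∀ i, Nbr i = univ.erase i) (hb : ∀ i, b i = 1) {x : Fin N → ℝ}
    (hx : ∀ j, x j = 0 ∨ x j = 1) (i : Fin N) {c : ℝ} (hc : 0 < c) :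
    F w Nbr b (Function.update x i c) =
      Function.update x i (agentUpdate (w i i) (∑ j ∈ univ.erase i, x j) (N - 1) c) := by
  funext j
  rcases eq_or_ne j i with rfl | hji
  · rw [F_apply_of_complete hw hNbr hb, Function.update_self, Function.update_self]
    congr 1
    exact sum_congr rfl fun k hk => Function.update_of_ne (ne_of_mem_erase hk) _ _
  rw [Function.update_of_ne hji]
  have hbj : b j ≠ 0 := by simp [hb]
  rcases hx j with hxj | hxj
  · exact hxj ▸ F_apply_of_eq_zero hbj (by rw [Function.update_of_ne hji, hxj])
  refine hxj ▸ F_apply_of_eq_one hbj (by rw [Function.update_of_ne hji, hxj]) (ne_of_gt ?_)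
  have hnonneg : ∀ k, 0 ≤ Function.update x i c k := by
    intro k
    rcases eq_or_ne k i with rfl | hki
    · simp [hc.le]
    · rcases hx k with h | h <;> simp [Function.update_of_ne hki, h]
  have hci : c ≤ wsum w Nbr (Function.update x i c) j := by
    rw [wsum_of_complete hw hNbr]
    simpa using single_le_sum (fun k _ => hnonneg k) (mem_erase.2 ⟨hji.symm, mem_univ i⟩)
  linarith [hwii j]

theorem fderiv_F_apply_single (hw : ∀ i j, i ≠ j → w i j = 1) (hNbr : ∀ i, Nbr i = univ.erase i)
    (hb : ∀ i, b i = 1) {x : Fin N → ℝ} {i : Fin N} (hxi : x i = 0 ∨ x i = 1)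
    (h₀ : w i i + (N - 1 - ∑ k ∈ univ.erase i, x k) ≠ 0) (h₁ : w i i + ∑ k ∈ univ.erase i, x k ≠ 0)
    (j : Fin N) :
    fderiv ℝ (fun y => F w Nbr b y i) x (Pi.single j 1) =
      if i = j then polarizedEntry (w i i) (∑ k ∈ univ.erase i, x k) (N - 1) (x i) else 0 := by
  have hD : w i i + (∑ k ∈ univ.erase i, x k) * x i
      + (N - 1 - ∑ k ∈ univ.erase i, x k) * (1 - x i) ≠ 0 := by
    rcases hxi with h | h <;> rw [h]
    · convert h₀ using 1; ring
    · convert h₁ using 1; ring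
  have hdiff : DifferentiableAt ℝ (fun y => F w Nbr b y i) x := by
    simp only [F_apply_of_complete hw hNbr hb, agentUpdate]
    fun_prop (disch := exact hD)
  have hsum (t : ℝ) : ∑ k ∈ univ.erase i, (x + t • Pi.single j 1 : Fin N → ℝ) k =
      ∑ k ∈ univ.erase i, x k + if i = j then 0 else t := by
    simp [sum_add_distrib, ← mul_sum, sum_pi_single', eq_comm]
  rw [← hdiff.lineDeriv_eq_fderiv, lineDeriv]
  simp only [F_apply_of_complete hw hNbr hb, hsum]
  split_ifs with hij
  · subst hij
    have hxt (t : ℝ) : (x + t • Pi.single i 1 : Fin N → ℝ) i = x i + t := by simp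
    simp only [hxt, add_zero]
    rw [deriv_comp_const_add, add_zero, deriv_agentUpdate_of_polarized hxi h₀ h₁]
  · have hxt (t : ℝ) : (x + t • Pi.single j 1 : Fin N → ℝ) i = x i := by simp [hij]
    simp only [hxt]
    exact (HasDerivAt.comp_const_add _ (0 : ℝ)
      (by rw [add_zero]; exact hasDerivAt_agentUpdate_neighbors hxi hD)).deriv

theorem not_lyapStable_of_one_lt_polarizedEntry (hw : ∀ i j, i ≠ j → w i j = 1)
    (hwii : ∀ i, 0 ≤ w i i) (hNbr : ∀ i, Nbr i = univ.erase i) (hb : ∀ i, b i = 1)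
    {x : Fin N → ℝ} (hx : ∀ j, x j = 0 ∨ x j = 1) {i : Fin N}
    (hi : 1 < polarizedEntry (w i i) (∑ k ∈ univ.erase i, x k) (N - 1) (x i)) :
    ¬ LyapStable (F w Nbr b) x := by
  set s := ∑ k ∈ univ.erase i, x k
  have hs₀ : 0 ≤ s := sum_univ_erase_nonneg hx i
  have hsm : s ≤ N - 1 := sum_univ_erase_le hx i
  have hW := hwii i
  rcases hx i with hxi | hxi
  · rw [polarizedEntry, if_pos hxi, one_lt_div_iff] at hi
    have h : (N : ℝ) - 1 < 2 * s := by rcases hi with ⟨-, h⟩ | ⟨h, -⟩ <;> linarith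
    exact not_lyapStable_of_expanding (ℓ := fun d => Function.update x i d) (ρ := 1 / 2)
      (by norm_num) (one_lt_div_of_lt_two_mul hW hsm h)
      (fun d => by simp [norm_update_sub_self, hxi])
      (fun d hd _ => F_update_of_polarized hw hwii hNbr hb hx i hd)
      (fun d hd hd' => mul_le_agentUpdate hW hsm h hd hd')
  · rw [polarizedEntry, if_neg (by simp [hxi]), one_lt_div_iff] at hi
    have h : (N : ℝ) - 1 < 2 * (N - 1 - s) := by rcases hi with ⟨-, h⟩ | ⟨h, -⟩ <;> linarith
    refine not_lyapStable_of_expanding (ℓ := fun d => Function.update x i (1 - d))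
      (φ := agentUpdate (w i i) (N - 1 - s) (N - 1)) (ρ := 1 / 2)
      (by norm_num) (one_lt_div_of_lt_two_mul hW (by linarith) h)
      (fun d => by simp [norm_update_sub_self, hxi])
      (fun d hd hd' => ?_) (fun d hd hd' => mul_le_agentUpdate hW (by linarith) h hd hd')
    rw [F_update_of_polarized hw hwii hNbr hb hx i (by linarith),
      agentUpdate_one_sub (ne_of_gt (by nlinarith))]

end

theorem stmt16 {N : ℕ} (n1 : ℕ) (hn1 : 2 ≤ n1) (hn2 : n1 ≤ N - 2)
    (w : Fin N → Fin N → ℝ) (hw : ∀ i j, i ≠ j → w i j = 1) (hwii : ∀ i, 0 ≤ w i i)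
    (Nbr : Fin N → Finset (Fin N)) (hNbr : ∀ i, Nbr i = Finset.univ.erase i)
    (b : Fin N → ℝ) (hb : ∀ i, b i = 1)
    (x : Fin N → ℝ) (hx : ∀ i, x i = 0 ∨ x i = 1)
    (hcard : (Finset.univ.filter (fun i => x i = 0)).card = n1) :
    (∀ i j, fderiv ℝ (fun y => F w Nbr b y i) x (Pi.single j 1) =
      if i = j then
        (if x i = 0 then (w i i + ((N - n1 : ℕ) : ℝ)) / (w i i + (n1 : ℝ) - 1)
         else (w i i + (n1 : ℝ)) / (w i i + ((N - n1 : ℕ) : ℝ) - 1))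
      else 0) ∧
    (∃ i, 1 < (if x i = 0 then (w i i + ((N - n1 : ℕ) : ℝ)) / (w i i + (n1 : ℝ) - 1)
               else (w i i + (n1 : ℝ)) / (w i i + ((N - n1 : ℕ) : ℝ) - 1))) ∧
    ¬ LyapStable (F w Nbr b) x := by
  have hsum := sum_univ_erase_eq_of_polarized hx hcard
  set B : ℝ := ((N - n1 : ℕ) : ℝ) with hB
  have hA2 : (2 : ℝ) ≤ n1 := by exact_mod_cast hn1
  have hB2 : 2 ≤ B := by rw [hB]; exact_mod_cast (by omega : 2 ≤ N - n1)
  have hN : (N : ℝ) = n1 + B := by rw [hB, Nat.cast_sub (by omega)]; ring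
  have hentry (i : Fin N) :
      polarizedEntry (w i i) (∑ k ∈ univ.erase i, x k) (N - 1) (x i) =
        if x i = 0 then (w i i + B) / (w i i + n1 - 1) else (w i i + n1) / (w i i + B - 1) := by
    rcases hx i with h | h <;>
      simp only [polarizedEntry, hsum, h, hN, if_pos, one_ne_zero, if_false] <;> congr 1 <;> ring
  have hpos (i : Fin N) : 0 < w i i + (N - 1 - ∑ k ∈ univ.erase i, x k) ∧
      0 < w i i + ∑ k ∈ univ.erase i, x k := by
    rw [hsum, hN]
    rcases hx i with h | h <;> rw [h] <;> constructor <;> linarith [hwii i]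
  simp only [← hentry]
  obtain ⟨i, hi⟩ : ∃ i, 1 < polarizedEntry (w i i) (∑ k ∈ univ.erase i, x k) (N - 1) (x i) := by
    simp only [hentry]
    rcases le_or_gt (n1 : ℝ) B with h | h
    · obtain ⟨i, hi⟩ := card_pos.1 (by omega : 0 < #{j | x j = 0})
      exact ⟨i, by rw [if_pos (mem_filter.1 hi).2, one_lt_div (by linarith [hwii i])]; linarith⟩
    · obtain ⟨i, hi⟩ := card_pos.1 (by rw [card_filter_ne_zero hcard]; omega)
      exact ⟨i, by rw [if_neg (mem_filter.1 hi).2, one_lt_div (by linarith [hwii i])]; linarith⟩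
  exact ⟨fun i j => fderiv_F_apply_single hw hNbr hb (hx i) (hpos i).1.ne' (hpos i).2.ne' j,
    ⟨i, hi⟩, not_lyapStable_of_one_lt_polarizedEntry hw hwii hNbr hb hx hi⟩
end

section
/- For the biased assimilation model with $b_i = 1$ on an undirected star graph with $N$ nodes (node 1 the center), unit weights $w_{ij} = 1$ for edges and self-weights $w_{ii} \ge 0$: a vector $x^* \in [0,1]^N$ with $x_1^* \notin \{0,1\}$ and some leaf value $x_i^* \notin \{0,1\}$ is a fixed point if and only if $x_1^* = 1/2$ and $\sum_{i=2}^N x_i^* = (N-1)/2$. -/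
/-!
With `b ≡ 1` the update at a node with self-weight `a`, opinion `y`, weighted neighbour sum `s`
and weighted degree `d` is `(a y + y s) / (a + y s + (1 - y)(d - s))`, and
`y · denominator - numerator = y (1 - y) (d - 2 s)`. So a node with an opinion strictly
inside `(0, 1)` is fixed only if `2 s = d`, and conversely `2 s = d` makes the denominator
`a + s` and fixes every opinion. On the star, `2 s = d` reads `2 x_c = 1` at a leaf and
`2 ∑_{i ≠ c} x_i = N - 1` at the centre.
-/

open Finset Filter Topology

namespace BiasedAssimilation

noncomputable def linearUpdate (a y s d : ℝ) : ℝ :=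
  (a * y + y * s) / (a + y * s + (1 - y) * (d - s))

theorem F_apply_eq_linearUpdate {N : ℕ} {w : Fin N → Fin N → ℝ} {Nbr : Fin N → Finset (Fin N)}
    {b : Fin N → ℝ} (x : Fin N → ℝ) {i : Fin N} (hb : b i = 1) :
    F w Nbr b x i = linearUpdate (w i i) (x i) (wsum w Nbr x i) (degw w Nbr i) := by
  rw [F, hb, Real.rpow_one, Real.rpow_one, linearUpdate]

theorem two_mul_eq_of_linearUpdate_eq_self {a y s d : ℝ} (hy0 : y ≠ 0) (hy1 : y ≠ 1)
    (h : linearUpdate a y s d = y) : 2 * s = d := by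
  have hden : a + y * s + (1 - y) * (d - s) ≠ 0 := by
    intro h0
    rw [linearUpdate, h0, div_zero] at h
    exact hy0 h.symm
  rw [linearUpdate, div_eq_iff hden] at h
  have key : y * (1 - y) * (d - 2 * s) = 0 := by linear_combination -h
  have hy1' : 1 - y ≠ 0 := sub_ne_zero.mpr (Ne.symm hy1)
  linarith [(mul_eq_zero.mp key).resolve_left (mul_ne_zero hy0 hy1')]

theorem linearUpdate_eq_self_of_two_mul_eq {a s d : ℝ} (y : ℝ) (hsd : 2 * s = d)
    (has : a + s ≠ 0) : linearUpdate a y s d = y := by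
  have hden : a + y * s + (1 - y) * (d - s) = a + s := by rw [← hsd]; ring
  rw [linearUpdate, hden, div_eq_iff has]
  ring

section UnitWeights

variable {N : ℕ} {w : Fin N → Fin N → ℝ} {Nbr : Fin N → Finset (Fin N)} {i : Fin N}

theorem wsum_eq_sum_of_unit_weights (hw : ∀ j, i ≠ j → w i j = 1) (hi : i ∉ Nbr i)
    (x : Fin N → ℝ) : wsum w Nbr x i = ∑ j ∈ Nbr i, x j :=
  sum_congr rfl fun j hj => by rw [hw j (ne_of_mem_of_not_mem hj hi).symm, one_mul]

theorem degw_eq_card_of_unit_weights (hw : ∀ j, i ≠ j → w i j = 1) (hi : i ∉ Nbr i) :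
    degw w Nbr i = #(Nbr i) := by
  rw [degw, sum_congr rfl fun j hj => hw j (ne_of_mem_of_not_mem hj hi).symm, sum_const,
    nsmul_one]

end UnitWeights

section Star

variable {N : ℕ} {c : Fin N} {Nbr : Fin N → Finset (Fin N)} {w : Fin N → Fin N → ℝ}

theorem wsum_star_center (hNbrC : Nbr c = univ.erase c) (hw : ∀ i j, i ≠ j → w i j = 1)
    (x : Fin N → ℝ) : wsum w Nbr x c = ∑ i ∈ univ.erase c, x i := by
  rw [wsum_eq_sum_of_unit_weights (hw c) (by simp [hNbrC]), hNbrC]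

theorem degw_star_center (hNbrC : Nbr c = univ.erase c) (hw : ∀ i j, i ≠ j → w i j = 1) :
    degw w Nbr c = (N : ℝ) - 1 := by
  rw [degw_eq_card_of_unit_weights (hw c) (by simp [hNbrC]), hNbrC,
    card_erase_of_mem (mem_univ c), card_univ, Fintype.card_fin, Nat.cast_pred c.pos]

theorem wsum_star_leaf (hNbrL : ∀ i, i ≠ c → Nbr i = {c}) (hw : ∀ i j, i ≠ j → w i j = 1)
    (x : Fin N → ℝ) {i : Fin N} (hi : i ≠ c) : wsum w Nbr x i = x c := by
  rw [wsum, hNbrL i hi, sum_singleton, hw i c hi, one_mul]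

theorem degw_star_leaf (hNbrL : ∀ i, i ≠ c → Nbr i = {c}) (hw : ∀ i j, i ≠ j → w i j = 1)
    {i : Fin N} (hi : i ≠ c) : degw w Nbr i = 1 := by
  rw [degw, hNbrL i hi, sum_singleton, hw i c hi]

end Star

end BiasedAssimilation

open BiasedAssimilation in
theorem stmt18_general {N : ℕ} (hN : 2 ≤ N) (c : Fin N)
    (Nbr : Fin N → Finset (Fin N))
    (hNbrC : Nbr c = Finset.univ.erase c) (hNbrL : ∀ i, i ≠ c → Nbr i = {c})
    (w : Fin N → Fin N → ℝ) (hw : ∀ i j, i ≠ j → w i j = 1) (hwii : ∀ i, 0 ≤ w i i)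
    (b : Fin N → ℝ) (hb : ∀ i, b i = 1)
    (x : Fin N → ℝ)
    (hc : x c ≠ 0 ∧ x c ≠ 1) (hleaf : ∃ i, i ≠ c ∧ x i ≠ 0 ∧ x i ≠ 1) :
    F w Nbr b x = x ↔
      (x c = 1/2 ∧ ∑ i ∈ Finset.univ.erase c, x i = ((N : ℝ) - 1) / 2) := by
  have hF : ∀ i, F w Nbr b x i = linearUpdate (w i i) (x i) (wsum w Nbr x i) (degw w Nbr i) :=
    fun i => F_apply_eq_linearUpdate x (hb i)
  constructor
  · intro hfix
    obtain ⟨i, hic, hi0, hi1⟩ := hleaf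
    have hleafBalanced := two_mul_eq_of_linearUpdate_eq_self hi0 hi1 (hF i ▸ congrFun hfix i)
    have hcenterBalanced := two_mul_eq_of_linearUpdate_eq_self hc.1 hc.2 (hF c ▸ congrFun hfix c)
    rw [wsum_star_leaf hNbrL hw x hic, degw_star_leaf hNbrL hw hic] at hleafBalanced
    rw [wsum_star_center hNbrC hw, degw_star_center hNbrC hw] at hcenterBalanced
    constructor <;> linarith
  · rintro ⟨hxc, hsum⟩
    funext i
    rw [hF]
    by_cases hic : i = c
    · subst hic
      have hN' : (2 : ℝ) ≤ N := by exact_mod_cast hN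
      rw [wsum_star_center hNbrC hw, degw_star_center hNbrC hw, hsum]
      exact linearUpdate_eq_self_of_two_mul_eq _ (by ring) (by linarith [hwii i])
    · rw [wsum_star_leaf hNbrL hw x hic, degw_star_leaf hNbrL hw hic, hxc]
      exact linearUpdate_eq_self_of_two_mul_eq _ (by norm_num) (by linarith [hwii i])

theorem stmt18 {N : ℕ} (hN : 2 ≤ N) (c : Fin N)
    (Nbr : Fin N → Finset (Fin N))
    (hNbrC : Nbr c = Finset.univ.erase c) (hNbrL : ∀ i, i ≠ c → Nbr i = {c})
    (w : Fin N → Fin N → ℝ) (hw : ∀ i j, i ≠ j → w i j = 1) (hwii : ∀ i, 0 ≤ w i i)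
    (b : Fin N → ℝ) (hb : ∀ i, b i = 1)
    (x : Fin N → ℝ) (hx01 : ∀ i, x i ∈ Set.Icc (0 : ℝ) 1)
    (hc : x c ≠ 0 ∧ x c ≠ 1) (hleaf : ∃ i, i ≠ c ∧ x i ≠ 0 ∧ x i ≠ 1) :
    F w Nbr b x = x ↔
      (x c = 1/2 ∧ ∑ i ∈ Finset.univ.erase c, x i = ((N : ℝ) - 1) / 2) :=
  stmt18_general hN c Nbr hNbrC hNbrL w hw hwii b hb x hc hleaf
end
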